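/- Let γ ∈ SL_n(ℝ) with singular value decomposition γ = k a k′, where k, k′ ∈ SO(n) and a = diag(a₁,…,a_n) with a₁ ≥ a₂ ≥ ⋯ ≥ a_n > 0. Let 0 < ε < 1/4 and suppose a₂/a₁ ≤ ε². Let H_γ be the projective hyperplane spanned by {k′⁻¹(e_i)}_{i=2}^n and v_γ = [k(e₁)]. Then γ maps the complement of the ε-neighborhood of H_γ in P^{n−1}(ℝ) into the ε-ball around v_γ; that is, for any nonzero v with d([v], H_γ) ≥ ε, one has d([γv], v_γ) ≤ ε. -/

import Mathlib

/-!
Write `w = k' v`. Orthogonal matrices preserve the projective distance, so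
`d([γ v], [k e₁]) = d([a w], [e₁])`, and by Lagrange's identity the latter is
`√(∑_{i ≥ 2} aᵢ² wᵢ²) / ‖a w‖ ≤ a₂ ‖w‖ / (a₁ |w₁|)`. Since `|w₁| / ‖w‖ = d([v], H_γ) ≥ ε`,
this is at most `a₂ / (a₁ ε) ≤ ε`.
-/

open scoped BigOperators

noncomputable def nrm {n : ℕ} (v : Fin n → ℝ) : ℝ := Real.sqrt (∑ i, v i ^ 2)

noncomputable def wedgeSq {n : ℕ} (v w : Fin n → ℝ) : ℝ :=
  ∑ i, ∑ j, if i < j then (v i * w j - v j * w i) ^ 2 else 0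

noncomputable def pd {n : ℕ} (v w : Fin n → ℝ) : ℝ :=
  Real.sqrt (wedgeSq v w) / (nrm v * nrm w)

open Finset Matrix

theorem Finset.two_mul_sum_sum_ite_lt {ι R : Type*} [Fintype ι] [LinearOrder ι]
    [NonAssocSemiring R] (f : ι → ι → R)
    (hsymm : ∀ i j, f i j = f j i) (hdiag : ∀ i, f i i = 0) :
    2 * ∑ i, ∑ j, (if i < j then f i j else 0) = ∑ i, ∑ j, f i j := by
  have hsplit : ∀ i j, f i j = (if i < j then f i j else 0) + (if j < i then f j i else 0) := by
    intro i j
    rcases lt_trichotomy i j with h | rfl | h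
    · simp [h, h.not_gt]
    · simp [hdiag]
    · simp [h, h.not_gt, hsymm i j]
  calc 2 * ∑ i, ∑ j, (if i < j then f i j else 0)
      = ∑ i, ∑ j, (if i < j then f i j else 0) + ∑ i, ∑ j, (if j < i then f j i else 0) := by
        rw [two_mul, sum_comm (f := fun i j => if i < j then f i j else 0)]
    _ = ∑ i, ∑ j, f i j := by
        simp only [← sum_add_distrib, ← hsplit]

theorem wedgeSq_eq {n : ℕ} (v w : Fin n → ℝ) :
    wedgeSq v w = (v ⬝ᵥ v) * (w ⬝ᵥ w) - (v ⬝ᵥ w) ^ 2 := by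
  have hexpand : ∀ i j, (v i * w j - v j * w i) ^ 2
      = v i * v i * (w j * w j) + w i * w i * (v j * v j) - 2 * (v i * w i * (v j * w j)) :=
    fun i j => by ring
  have hfull : ∑ i, ∑ j, (v i * w j - v j * w i) ^ 2
      = 2 * ((v ⬝ᵥ v) * (w ⬝ᵥ w) - (v ⬝ᵥ w) ^ 2) := by
    simp only [hexpand, sum_add_distrib, sum_sub_distrib, ← mul_sum, ← sum_mul, dotProduct]
    ring
  have hhalf := two_mul_sum_sum_ite_lt (fun i j => (v i * w j - v j * w i) ^ 2)
    (fun i j => by ring) (fun i => by ring)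
  rw [wedgeSq]
  linarith

theorem nrm_eq_sqrt_dotProduct {n : ℕ} (v : Fin n → ℝ) : nrm v = √(v ⬝ᵥ v) := by
  simp only [nrm, dotProduct, sq]

theorem abs_apply_le_nrm {n : ℕ} (v : Fin n → ℝ) (i : Fin n) : |v i| ≤ nrm v := by
  rw [nrm, ← Real.sqrt_sq_eq_abs]
  exact Real.sqrt_le_sqrt (single_le_sum (fun j _ => sq_nonneg (v j)) (mem_univ i))

theorem pd_eq {n : ℕ} (v w : Fin n → ℝ) :
    pd v w = √((v ⬝ᵥ v) * (w ⬝ᵥ w) - (v ⬝ᵥ w) ^ 2) / (√(v ⬝ᵥ v) * √(w ⬝ᵥ w)) := by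
  rw [pd, wedgeSq_eq, nrm_eq_sqrt_dotProduct, nrm_eq_sqrt_dotProduct]

theorem Matrix.mulVec_dotProduct_mulVec_of_transpose_mul_self {m n R : Type*} [Fintype m]
    [Fintype n] [DecidableEq n] [CommSemiring R] {k : Matrix m n R} (hk : kᵀ * k = 1) (x y : n → R) :
    k *ᵥ x ⬝ᵥ k *ᵥ y = x ⬝ᵥ y := by
  rw [dotProduct_mulVec, ← mulVec_transpose, mulVec_mulVec, hk, one_mulVec]

theorem nrm_mulVec_of_transpose_mul_self {n : ℕ} {k : Matrix (Fin n) (Fin n) ℝ}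
    (hk : kᵀ * k = 1) (v : Fin n → ℝ) : nrm (k *ᵥ v) = nrm v := by
  simp only [nrm_eq_sqrt_dotProduct, mulVec_dotProduct_mulVec_of_transpose_mul_self hk]

theorem pd_mulVec_of_transpose_mul_self {n : ℕ} {k : Matrix (Fin n) (Fin n) ℝ}
    (hk : kᵀ * k = 1) (v w : Fin n → ℝ) : pd (k *ᵥ v) (k *ᵥ w) = pd v w := by
  simp only [pd_eq, mulVec_dotProduct_mulVec_of_transpose_mul_self hk]

theorem pd_single_one {n : ℕ} (v : Fin n → ℝ) (i : Fin n) :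
    pd v (Pi.single i 1) = √(v ⬝ᵥ v - v i ^ 2) / nrm v := by
  simp [pd_eq, nrm_eq_sqrt_dotProduct]

theorem mul_dotProduct_mul_sub_sq_le {ι : Type*} [Fintype ι] [DecidableEq ι]
    (a w : ι → ℝ) (i : ι) {b : ℝ} (hb : ∀ j ≠ i, |a j| ≤ b) :
    (a * w) ⬝ᵥ (a * w) - (a i * w i) ^ 2 ≤ b ^ 2 * (w ⬝ᵥ w) := by
  calc (a * w) ⬝ᵥ (a * w) - (a i * w i) ^ 2 = ∑ j ∈ univ.erase i, a j ^ 2 * w j ^ 2 := by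
        rw [dotProduct, ← add_sum_erase _ _ (mem_univ i)]
        simp only [Pi.mul_apply]
        ring_nf
    _ ≤ ∑ j ∈ univ.erase i, b ^ 2 * w j ^ 2 := by
        refine sum_le_sum fun j hj => mul_le_mul_of_nonneg_right ?_ (sq_nonneg _)
        exact sq_le_sq.mpr ((hb j (ne_of_mem_erase hj)).trans (le_abs_self b))
    _ ≤ ∑ j, b ^ 2 * w j ^ 2 :=
        sum_le_sum_of_subset_of_nonneg (subset_univ _) fun j _ _ => by positivity
    _ = b ^ 2 * (w ⬝ᵥ w) := by simp only [dotProduct, ← mul_sum, sq]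

theorem pd_mul_single_one_le {n : ℕ} (a w : Fin n → ℝ) (i : Fin n) {b ε : ℝ} (hb0 : 0 ≤ b)
    (hb : ∀ j ≠ i, |a j| ≤ b) (hai : 0 < a i) (hε : 0 < ε) (hfar : ε ≤ |w i| / nrm w) :
    pd (a * w) (Pi.single i 1) ≤ b / (a i * ε) := by
  have hnrm : 0 < nrm w := by
    by_contra! h
    rw [h.antisymm (Real.sqrt_nonneg _), div_zero] at hfar
    linarith
  have hden : a i * (ε * nrm w) ≤ nrm (a * w) :=
    calc a i * (ε * nrm w) ≤ a i * |w i| := by gcongr; exact (le_div_iff₀ hnrm).mp hfar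
      _ = |(a * w) i| := by rw [Pi.mul_apply, abs_mul, abs_of_pos hai]
      _ ≤ nrm (a * w) := abs_apply_le_nrm (a * w) i
  rw [pd_single_one]
  calc √((a * w) ⬝ᵥ (a * w) - (a * w) i ^ 2) / nrm (a * w)
      ≤ √(b ^ 2 * (w ⬝ᵥ w)) / (a i * (ε * nrm w)) :=
        div_le_div₀ (Real.sqrt_nonneg _)
          (Real.sqrt_le_sqrt (mul_dotProduct_mul_sub_sq_le a w i hb)) (by positivity) hden
    _ = b / (a i * ε) := by
        rw [Real.sqrt_mul (sq_nonneg b), Real.sqrt_sq hb0, ← nrm_eq_sqrt_dotProduct]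
        field_simp

/-- Breuillard–Gelander Proposition 3.1: if `γ = k a k' ∈ SL_n(ℝ)` with
`a = diag(a₁ ≥ ⋯ ≥ a_n > 0)` and `a₂/a₁ ≤ ε²` with `0 < ε < 1/4`, then `γ` maps the
complement of the `ε`-neighborhood of the repelling hyperplane `H_γ` (spanned by
`k'⁻¹ e_i`, `i ≥ 2`; the distance from `[v]` to `H_γ` is `|(k' v)₁|/‖v‖`) into the
`ε`-ball around `v_γ = [k e₁]`. -/
theorem eps_contracting_of_singular_gap {n : ℕ} (hn : 2 ≤ n)
    (k k' : Matrix (Fin n) (Fin n) ℝ)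
    (hk : k.transpose * k = 1)
    (hk' : k'.transpose * k' = 1)
    (a : Fin n → ℝ) (ha_pos : ∀ i, 0 < a i) (ha_mono : ∀ i j : Fin n, i ≤ j → a j ≤ a i)
    (γ : Matrix (Fin n) (Fin n) ℝ) (hγ : γ = k * Matrix.diagonal a * k')
    (ε : ℝ) (hε0 : 0 < ε)
    (hgap : a ⟨1, by omega⟩ / a ⟨0, by omega⟩ ≤ ε ^ 2)
    (v : Fin n → ℝ)
    (hfar : ε ≤ |(k'.mulVec v) ⟨0, by omega⟩| / nrm v) :
    pd (γ.mulVec v) (k.mulVec (fun i => if i = ⟨0, by omega⟩ then 1 else 0)) ≤ ε := by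
  set i₀ : Fin n := ⟨0, by omega⟩
  set i₁ : Fin n := ⟨1, by omega⟩
  set w := k' *ᵥ v
  have hγv : γ *ᵥ v = k *ᵥ (a * w) := by
    rw [hγ, ← mulVec_mulVec, ← mulVec_mulVec]
    congr 1
    ext i
    exact mulVec_diagonal a w i
  have hsingle : (fun i => if i = i₀ then (1 : ℝ) else 0) = Pi.single i₀ 1 := by
    ext i
    simp [Pi.single_apply]
  have hb : ∀ j ≠ i₀, |a j| ≤ a i₁ := fun j hj =>
    (abs_of_pos (ha_pos j)).trans_le
      (ha_mono _ _ (Nat.one_le_iff_ne_zero.mpr fun h => hj (Fin.ext h)))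
  have hfar_w : ε ≤ |w i₀| / nrm w := by rwa [nrm_mulVec_of_transpose_mul_self hk']
  rw [hγv, hsingle, pd_mulVec_of_transpose_mul_self hk]
  calc pd (a * w) (Pi.single i₀ 1) ≤ a i₁ / (a i₀ * ε) :=
        pd_mul_single_one_le a w i₀ (ha_pos i₁).le hb (ha_pos i₀) hε0 hfar_w
    _ = a i₁ / a i₀ / ε := by rw [div_div]
    _ ≤ ε ^ 2 / ε := by gcongr
    _ = ε := by field_simp
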